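/- arXiv:2604.15769 — 2 statements merged into one kernel-verified Lean document; each statement's English description precedes it below -/
import Mathlib

section
/- Let M > 0, δ ∈ (0,1), and z ∈ [−M, M], and set r = (z+M)/(2M) and w_j = (2M)^j/j!. Suppose J is a natural number with e^{2M}·(2M)^{J+1}/(J+1)! ≤ δ/2, and suppose X_0, …, X_J are independent real-valued random variables with E[X_j] = r^j and Var(X_j) ≤ 1/(4T), where T ≥ e^{4M}/δ³. Then P[ |Σ_{j=0}^J w_j X_j − e^{z+M}| > δ ] ≤ δ. -/
open MeasureTheory ProbabilityTheory Finset

lemma exp_tail_le (x : ℝ) (hx : 0 ≤ x) (n : ℕ) :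
    Real.exp x - ∑ j ∈ Finset.range n, x ^ j / (Nat.factorial j : ℝ)
      ≤ x ^ n / (Nat.factorial n : ℝ) * Real.exp x := by
  have hsum : HasSum (fun j : ℕ => x ^ j / (Nat.factorial j : ℝ)) (Real.exp x) := by
    rw [Real.exp_eq_exp_ℝ]
    exact NormedSpace.expSeries_div_hasSum_exp x
  have hsplit := Summable.sum_add_tsum_nat_add (f := fun j : ℕ => x ^ j / (Nat.factorial j : ℝ))
    n hsum.summable
  rw [hsum.tsum_eq] at hsplit
  have h1 : Real.exp x - ∑ j ∈ Finset.range n, x ^ j / (Nat.factorial j : ℝ)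
      = ∑' i : ℕ, x ^ (i + n) / (Nat.factorial (i + n) : ℝ) := by linarith
  rw [h1]
  have hterm : ∀ i : ℕ, x ^ (i + n) / (Nat.factorial (i + n) : ℝ)
      ≤ x ^ n / (Nat.factorial n : ℝ) * (x ^ i / (Nat.factorial i : ℝ)) := by
    intro i
    have hd : (Nat.factorial i * Nat.factorial n : ℝ) ≤ (Nat.factorial (i + n) : ℝ) := by
      exact_mod_cast Nat.le_of_dvd (Nat.factorial_pos _)
        (Nat.factorial_mul_factorial_dvd_factorial_add i n)
    have hpos : (0 : ℝ) < Nat.factorial i * Nat.factorial n := by positivity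
    calc x ^ (i + n) / (Nat.factorial (i + n) : ℝ)
        ≤ x ^ (i + n) / (Nat.factorial i * Nat.factorial n : ℝ) :=
          div_le_div_of_nonneg_left (by positivity) hpos hd
      _ = x ^ n / (Nat.factorial n : ℝ) * (x ^ i / (Nat.factorial i : ℝ)) := by
          rw [pow_add]; ring
  calc (∑' i : ℕ, x ^ (i + n) / (Nat.factorial (i + n) : ℝ))
      ≤ ∑' i : ℕ, x ^ n / (Nat.factorial n : ℝ) * (x ^ i / (Nat.factorial i : ℝ)) :=
        Summable.tsum_le_tsum hterm ((summable_nat_add_iff n).2 hsum.summable)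
          (hsum.summable.mul_left _)
    _ = x ^ n / (Nat.factorial n : ℝ) * Real.exp x := by
        rw [tsum_mul_left, hsum.tsum_eq]

/-- **Exponential via hierarchical spike coincidence (paper's Lemma 2, combined).**
With `r = (z+M)/(2M)`, weights `w j = (2M)^j/j!`, truncation degree `J` satisfying
`e^{2M}(2M)^{J+1}/(J+1)! ≤ δ/2`, and `T ≥ e^{4M}/δ³` timesteps, the weighted readout
`Σ_{j=0}^J w j X j` of empirical coincidence rates `X j` (with `E[X j] = r^j`,
`Var(X j) ≤ 1/(4T)`) estimates `e^{z+M}` within `δ` with probability at least `1 − δ`. -/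
theorem exp_spike_coincidence_estimate
    {Ω : Type*} [MeasurableSpace Ω] (μ : Measure Ω) [IsProbabilityMeasure μ]
    (M δ z : ℝ) (hM : 0 < M) (hδ : δ ∈ Set.Ioo (0 : ℝ) 1)
    (hz : z ∈ Set.Icc (-M) M)
    (J : ℕ)
    (hJ : Real.exp (2 * M) * (2 * M) ^ (J + 1) / (Nat.factorial (J + 1) : ℝ) ≤ δ / 2)
    (T : ℕ) (hT : (T : ℝ) ≥ Real.exp (4 * M) / δ ^ 3)
    (X : Fin (J + 1) → Ω → ℝ)
    (hXmeas : ∀ j, Measurable (X j))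
    (hXl2 : ∀ j, MemLp (X j) 2 μ)
    (hXindep : iIndepFun X μ)
    (hXmean : ∀ j, (∫ ω, X j ω ∂μ) = ((z + M) / (2 * M)) ^ (j : ℕ))
    (hXvar : ∀ j, variance (X j) μ ≤ 1 / (4 * T)) :
    μ {ω | |(∑ j : Fin (J + 1), (2 * M) ^ (j : ℕ) / (Nat.factorial j : ℝ) * X j ω)
            - Real.exp (z + M)| > δ}
      ≤ ENNReal.ofReal δ := by
  obtain ⟨hδ0, hδ1⟩ := hδ
  obtain ⟨hz1, hz2⟩ := hz
  have h2M : (0 : ℝ) < 2 * M := by linarith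
  set x : ℝ := z + M with hxdef
  have hx0 : 0 ≤ x := by simp only [hxdef]; linarith
  have hx2 : x ≤ 2 * M := by simp only [hxdef]; linarith
  set c : Fin (J + 1) → ℝ := fun j => (2 * M) ^ (j : ℕ) / (Nat.factorial (j : ℕ) : ℝ) with hc
  have hcpos : ∀ j, 0 ≤ c j := fun j => by positivity
  set Y : Fin (J + 1) → Ω → ℝ := fun j ω => c j * X j ω with hY
  have hYmem : ∀ j, MemLp (Y j) 2 μ := fun j => (hXl2 j).const_mul _
  set S : Ω → ℝ := fun ω => ∑ j : Fin (J + 1), Y j ω with hS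
  have hSmem : MemLp S 2 μ := memLp_finset_sum _ (fun j _ => hYmem j)
  -- mean of S
  have hmean : (∫ ω, S ω ∂μ) = ∑ j ∈ Finset.range (J + 1), x ^ j / (Nat.factorial j : ℝ) := by
    rw [hS]
    rw [integral_finset_sum _ (fun j _ => ((hXl2 j).const_mul (c j)).integrable one_le_two)]
    rw [← Fin.sum_univ_eq_sum_range (fun j => x ^ j / (Nat.factorial j : ℝ))]
    refine Finset.sum_congr rfl (fun j _ => ?_)
    rw [integral_const_mul, hXmean j, hc]
    rw [div_mul_eq_mul_div, ← mul_pow, mul_div_cancel₀ _ (ne_of_gt h2M)]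
  -- truncation bound
  have htrunc : |(∫ ω, S ω ∂μ) - Real.exp x| ≤ δ / 2 := by
    rw [hmean, abs_sub_comm]
    have hle : ∑ j ∈ Finset.range (J + 1), x ^ j / (Nat.factorial j : ℝ) ≤ Real.exp x :=
      Real.sum_le_exp_of_nonneg hx0 _
    rw [abs_of_nonneg (by linarith)]
    have h1 := exp_tail_le x hx0 (J + 1)
    have h2 : x ^ (J + 1) / (Nat.factorial (J + 1) : ℝ) * Real.exp x
        ≤ Real.exp (2 * M) * (2 * M) ^ (J + 1) / (Nat.factorial (J + 1) : ℝ) := by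
      have hp : x ^ (J + 1) ≤ (2 * M) ^ (J + 1) := pow_le_pow_left₀ hx0 hx2 _
      have he : Real.exp x ≤ Real.exp (2 * M) := Real.exp_le_exp.2 hx2
      have hfp : (0 : ℝ) < (Nat.factorial (J + 1) : ℝ) := by
        exact_mod_cast Nat.factorial_pos _
      rw [div_mul_eq_mul_div, div_le_div_iff₀ hfp hfp]
      have hb : x ^ (J + 1) * Real.exp x ≤ Real.exp (2 * M) * (2 * M) ^ (J + 1) := by
        calc x ^ (J + 1) * Real.exp x ≤ (2 * M) ^ (J + 1) * Real.exp (2 * M) :=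
              mul_le_mul hp he (Real.exp_pos _).le (by positivity)
          _ = Real.exp (2 * M) * (2 * M) ^ (J + 1) := mul_comm _ _
      nlinarith [hfp, hb]
    linarith
  -- variance bound
  have hTpos : (0 : ℝ) < T := lt_of_lt_of_le (by positivity) hT
  have hvarsum : variance S μ = ∑ j : Fin (J + 1), (c j) ^ 2 * variance (X j) μ := by
    rw [hS]
    have : (fun ω => ∑ j : Fin (J + 1), Y j ω) = ∑ j : Fin (J + 1), Y j := by
      ext ω; simp
    rw [this, IndepFun.variance_sum (fun j _ => hYmem j)]
    · exact Finset.sum_congr rfl (fun j _ => variance_const_mul (c j) (X j) μ)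
    · intro i _ j _ hij
      exact (hXindep.indepFun hij).comp (measurable_const_mul (c i))
        (measurable_const_mul (c j))
  have hsumc : ∑ j : Fin (J + 1), c j ≤ Real.exp (2 * M) := by
    rw [hc, Fin.sum_univ_eq_sum_range (fun j => (2 * M) ^ j / (Nat.factorial j : ℝ))]
    exact Real.sum_le_exp_of_nonneg h2M.le _
  have hsumsq : ∑ j : Fin (J + 1), (c j) ^ 2 ≤ Real.exp (4 * M) := by
    calc ∑ j : Fin (J + 1), (c j) ^ 2 ≤ (∑ j : Fin (J + 1), c j) ^ 2 :=
          Finset.sum_sq_le_sq_sum_of_nonneg (fun j _ => hcpos j)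
      _ ≤ Real.exp (2 * M) ^ 2 := by
          apply pow_le_pow_left₀ (Finset.sum_nonneg (fun j _ => hcpos j)) hsumc
      _ = Real.exp (4 * M) := by
          rw [← Real.exp_nat_mul]; norm_num; ring_nf
  have hvar : variance S μ ≤ δ ^ 3 / 4 := by
    have h1 : variance S μ ≤ Real.exp (4 * M) * (1 / (4 * T)) := by
      rw [hvarsum]
      calc ∑ j : Fin (J + 1), (c j) ^ 2 * variance (X j) μ
          ≤ ∑ j : Fin (J + 1), (c j) ^ 2 * (1 / (4 * T)) :=
            Finset.sum_le_sum (fun j _ => mul_le_mul_of_nonneg_left (hXvar j) (sq_nonneg _))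
        _ = (∑ j : Fin (J + 1), (c j) ^ 2) * (1 / (4 * T)) := by rw [← Finset.sum_mul]
        _ ≤ Real.exp (4 * M) * (1 / (4 * T)) := by
            apply mul_le_mul_of_nonneg_right hsumsq (by positivity)
    have h2 : Real.exp (4 * M) * (1 / (4 * T)) ≤ δ ^ 3 / 4 := by
      have hT' : Real.exp (4 * M) ≤ (T : ℝ) * δ ^ 3 := by
        rw [ge_iff_le, div_le_iff₀ (by positivity : (0:ℝ) < δ ^ 3)] at hT
        exact hT
      rw [mul_one_div, div_le_div_iff₀ (by positivity) (by norm_num : (0:ℝ) < 4)]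
      nlinarith
    linarith
  -- Chebyshev
  have hcheb := meas_ge_le_variance_div_sq (μ := μ) hSmem (c := δ / 2) (by linarith)
  have hsub : {ω | |(∑ j : Fin (J + 1), (2 * M) ^ (j : ℕ) / (Nat.factorial j : ℝ) * X j ω)
            - Real.exp (z + M)| > δ} ⊆ {ω | δ / 2 ≤ |S ω - (∫ ω, S ω ∂μ)|} := by
    intro ω hω
    simp only [Set.mem_setOf_eq] at hω ⊢
    have hSω : S ω = ∑ j : Fin (J + 1), (2 * M) ^ (j : ℕ) / (Nat.factorial j : ℝ) * X j ω := rfl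
    have htri : |S ω - (∫ ω, S ω ∂μ)| ≥ |S ω - Real.exp x| - |(∫ ω, S ω ∂μ) - Real.exp x| := by
      have := abs_sub_abs_le_abs_sub (S ω - Real.exp x) ((∫ ω, S ω ∂μ) - Real.exp x)
      have heq : S ω - Real.exp x - ((∫ ω, S ω ∂μ) - Real.exp x) = S ω - (∫ ω, S ω ∂μ) := by ring
      rw [heq] at this
      linarith
    have : |S ω - Real.exp x| > δ := by rw [hSω]; exact hω
    linarith
  calc μ {ω | |(∑ j : Fin (J + 1), (2 * M) ^ (j : ℕ) / (Nat.factorial j : ℝ) * X j ω)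
            - Real.exp (z + M)| > δ}
      ≤ μ {ω | δ / 2 ≤ |S ω - (∫ ω, S ω ∂μ)|} := measure_mono hsub
    _ ≤ ENNReal.ofReal (variance S μ / (δ / 2) ^ 2) := hcheb
    _ ≤ ENNReal.ofReal δ := by
        apply ENNReal.ofReal_le_ofReal
        rw [div_le_iff₀ (by positivity)]
        nlinarith [variance_nonneg S μ]
end

section
/- Let d ≥ 1, L > 0, and ε > 0 with ε/L < 1/2. The map f: [0,1]^d → ℝ^d given by f(x) = L·x is L-Lipschitz in the ℓ∞ norm, and every function g: [0,1]^d → ℝ^d whose image is a finite set of cardinality strictly less than (L/(2ε))^d satisfies sup_{x ∈ [0,1]^d} ‖g(x) − f(x)‖_∞ > ε. -/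
/-!
Assume `g` approximates `f x = L • x` to within `ε` at every point of the cube. Then any two
points whose images under `f` are more than `2ε` apart have distinct images under `g`. With
`M = ⌈L / (2ε)⌉₊`, the grid `{0, 1/(M-1), …, 1}^d` has spacing `1/(M-1) > 2ε/L`, so `g` takes at
least `M^d ≥ (L / (2ε))^d` values on the cube.
-/

open Function

theorem injective_of_forall_dist_le_of_pairwise_lt_dist {ι β : Type*} [PseudoMetricSpace β]
    {f g : ι → β} {ε : ℝ} (hg : ∀ i, dist (g i) (f i) ≤ ε)
    (hf : Pairwise fun i j => 2 * ε < dist (f i) (f j)) : Injective g := by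
  intro i j hij
  by_contra hne
  have : dist (f i) (f j) ≤ 2 * ε :=
    calc dist (f i) (f j) ≤ dist (g i) (f i) + dist (g j) (f j) := by
          rw [← hij]; exact dist_triangle_left _ _ _
      _ ≤ 2 * ε := by linarith [hg i, hg j]
  exact (hf hne).not_ge this

noncomputable def cubeGrid (d M : ℕ) (k : Fin d → Fin M) : Fin d → ℝ :=
  fun i => (k i : ℝ) / ((M : ℝ) - 1)

theorem cubeGrid_mem_Icc {d M : ℕ} (k : Fin d → Fin M) (i : Fin d) :
    cubeGrid d M k i ∈ Set.Icc (0 : ℝ) 1 := by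
  have hk : (k i : ℝ) + 1 ≤ M := by exact_mod_cast (k i).isLt
  refine ⟨div_nonneg (Nat.cast_nonneg _) (by linarith [(k i : ℕ).cast_nonneg (α := ℝ)]), ?_⟩
  exact div_le_one_of_le₀ (by linarith) (by linarith [(k i : ℕ).cast_nonneg (α := ℝ)])

theorem inv_lt_dist_cubeGrid {d M : ℕ} {r : ℝ} (hM : (M : ℝ) - 1 < r)
    {k k' : Fin d → Fin M} (hkk' : k ≠ k') : r⁻¹ < dist (cubeGrid d M k) (cubeGrid d M k') := by
  obtain ⟨i, hi⟩ := ne_iff.mp hkk'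
  have hgap : (1 : ℝ) ≤ |(k i : ℝ) - k' i| := by
    have : (k i : ℤ) ≠ k' i := fun h => hi (Fin.ext (by exact_mod_cast h))
    exact_mod_cast Int.one_le_abs (sub_ne_zero.mpr this)
  have hM1 : (0 : ℝ) < (M : ℝ) - 1 := by
    have : 2 ≤ M := by
      have := (k i).isLt; have := (k' i).isLt; have := Fin.val_ne_of_ne hi; omega
    have : (2 : ℝ) ≤ M := by exact_mod_cast this
    linarith
  calc r⁻¹ < ((M : ℝ) - 1)⁻¹ := inv_strictAnti₀ hM1 hM
    _ ≤ |(k i : ℝ) - k' i| / ((M : ℝ) - 1) := by rw [inv_eq_one_div]; gcongr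
    _ = dist (cubeGrid d M k i) (cubeGrid d M k' i) := by
        rw [Real.dist_eq, cubeGrid, cubeGrid, ← sub_div, abs_div, abs_of_pos hM1]
    _ ≤ dist (cubeGrid d M k) (cubeGrid d M k') := dist_le_pi_dist _ _ i

theorem lipschitz_target_finite_image_lower_bound_general
    (d : ℕ) (L ε : ℝ) (hL : 0 < L) (hε : 0 < ε) :
    LipschitzOnWith (Real.toNNReal L) (fun x : Fin d → ℝ => L • x)
      {x | ∀ i, x i ∈ Set.Icc (0 : ℝ) 1} ∧
    ∀ g : (Fin d → ℝ) → (Fin d → ℝ),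
      ∀ hfin : (g '' {x | ∀ i, x i ∈ Set.Icc (0 : ℝ) 1}).Finite,
        (hfin.toFinset.card : ℝ) < (L / (2 * ε)) ^ d →
        ∃ x : Fin d → ℝ, (∀ i, x i ∈ Set.Icc (0 : ℝ) 1) ∧ ε < ‖g x - L • x‖ := by
  refine ⟨?_, fun g hfin hcard => ?_⟩
  · rw [Real.toNNReal_eq_nnnorm_of_nonneg hL.le]
    exact (lipschitzWith_smul L).lipschitzOnWith
  by_contra! hclose
  set r := L / (2 * ε)
  have hr : 0 < r := by positivity
  set M := ⌈r⌉₊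
  have hinj : Injective fun k => g (cubeGrid d M k) := by
    refine injective_of_forall_dist_le_of_pairwise_lt_dist (f := fun k => L • cubeGrid d M k)
      (fun k => (dist_eq_norm _ _).trans_le (hclose _ fun i => cubeGrid_mem_Icc k i))
      fun k k' hkk' => ?_
    have := inv_lt_dist_cubeGrid (by linarith [Nat.ceil_lt_add_one hr.le]) hkk'
    change 2 * ε < dist (L • _) (L • _)
    rw [dist_smul₀, Real.norm_of_nonneg hL.le]
    calc 2 * ε = L * r⁻¹ := by rw [inv_div]; field_simp
      _ < _ := mul_lt_mul_of_pos_left this hL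
  have hcount : M ^ d ≤ hfin.toFinset.card := by
    simpa using Finset.card_le_card_of_injOn (s := Finset.univ) _
      (fun k _ => hfin.mem_toFinset.mpr ⟨_, fun i => cubeGrid_mem_Icc k i, rfl⟩) hinj.injOn
  have hrM : r ^ d ≤ (M : ℝ) ^ d := pow_le_pow_left₀ hr.le (Nat.le_ceil r) d
  have hcount' : (M : ℝ) ^ d ≤ hfin.toFinset.card := by exact_mod_cast hcount
  linarith

/-- **Lipschitz-scaled lower-bound core of the paper's Theorem 2 (Spike-Count Lower Bound).**
The map `f(x) = L·x` on `[0,1]^d` is `L`-Lipschitz in the `ℓ∞` norm (here `Fin d → ℝ`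
carries the sup norm), and any `g` whose image on the cube is a finite set of cardinality
strictly less than `(L/(2ε))^d` fails to `ε`-approximate `f` in the sup sense. -/
theorem lipschitz_target_finite_image_lower_bound
    (d : ℕ) (hd : 1 ≤ d) (L ε : ℝ) (hL : 0 < L) (hε : 0 < ε)
    (hres : ε / L < 1 / 2) :
    LipschitzOnWith (Real.toNNReal L) (fun x : Fin d → ℝ => L • x)
      {x | ∀ i, x i ∈ Set.Icc (0 : ℝ) 1} ∧
    ∀ g : (Fin d → ℝ) → (Fin d → ℝ),
      ∀ hfin : (g '' {x | ∀ i, x i ∈ Set.Icc (0 : ℝ) 1}).Finite,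
        (hfin.toFinset.card : ℝ) < (L / (2 * ε)) ^ d →
        ∃ x : Fin d → ℝ, (∀ i, x i ∈ Set.Icc (0 : ℝ) 1) ∧ ε < ‖g x - L • x‖ :=
  lipschitz_target_finite_image_lower_bound_general d L ε hL hε
end
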